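/- arXiv:2312.02016 — 4 statements merged into one kernel-verified Lean document; each statement's English description precedes it below -/
import Mathlib

section
/- If {(A^j, B^j)}_{j=1}^s is a biclique cover of the complement of the subgraph of G induced by A ∪ C, {(A'^j, B'^j)}_{j=1}^r is a biclique cover of the complement of the subgraph of G induced by B ∪ C, and (A, B, C) partitions the vertices of G with no G-edge between A and B, then these two families together with the pair (A, B) form a biclique cover of the complement graph Gᶜ. -/
/-- A family of pairs of vertex sets is a biclique cover for the adjacency relation
`Adj`: each pair consists of disjoint sets all of whose cross pairs satisfy `Adj`, and
every pair `u, v` with `Adj u v` is a cross pair of some member. -/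
def IsBicliqueCoverRel {J : Type*} (Adj : J → J → Prop) (F : List (Set J × Set J)) : Prop :=
  (∀ p ∈ F, Disjoint p.1 p.2 ∧ ∀ a ∈ p.1, ∀ b ∈ p.2, Adj a b) ∧
  (∀ u v : J, Adj u v → ∃ p ∈ F, (u ∈ p.1 ∧ v ∈ p.2) ∨ (v ∈ p.1 ∧ u ∈ p.2))

/-- Adjacency of the complement of the subgraph of `G` induced by `S`. -/
def inducedComplAdj {J : Type*} (G : SimpleGraph J) (S : Set J) (u v : J) : Prop :=
  u ∈ S ∧ v ∈ S ∧ u ≠ v ∧ ¬ G.Adj u v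

section

variable {J : Type*}

theorem IsBicliqueCoverRel.cons_append {Adj Adj₁ Adj₂ : J → J → Prop}
    {F₁ F₂ : List (Set J × Set J)} {p : Set J × Set J}
    (hp : Disjoint p.1 p.2 ∧ ∀ a ∈ p.1, ∀ b ∈ p.2, Adj a b)
    (h₁ : IsBicliqueCoverRel Adj₁ F₁) (h₂ : IsBicliqueCoverRel Adj₂ F₂)
    (hle₁ : ∀ u v, Adj₁ u v → Adj u v) (hle₂ : ∀ u v, Adj₂ u v → Adj u v)
    (hcover : ∀ u v, Adj u v →
      Adj₁ u v ∨ Adj₂ u v ∨ (u ∈ p.1 ∧ v ∈ p.2) ∨ (v ∈ p.1 ∧ u ∈ p.2)) :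
    IsBicliqueCoverRel Adj (p :: (F₁ ++ F₂)) := by
  obtain ⟨hbic₁, hcov₁⟩ := h₁
  obtain ⟨hbic₂, hcov₂⟩ := h₂
  refine ⟨fun q hq => ?_, fun u v huv => ?_⟩
  · rcases List.mem_cons.1 hq with rfl | hq
    · exact hp
    rcases List.mem_append.1 hq with hq | hq
    · exact (hbic₁ q hq).imp_right fun h a ha b hb => hle₁ a b (h a ha b hb)
    · exact (hbic₂ q hq).imp_right fun h a ha b hb => hle₂ a b (h a ha b hb)
  rcases hcover u v huv with h | h | h
  · obtain ⟨q, hq, hmem⟩ := hcov₁ u v h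
    exact ⟨q, List.mem_cons_of_mem _ (List.mem_append_left _ hq), hmem⟩
  · obtain ⟨q, hq, hmem⟩ := hcov₂ u v h
    exact ⟨q, List.mem_cons_of_mem _ (List.mem_append_right _ hq), hmem⟩
  · exact ⟨p, List.mem_cons_self, h⟩

theorem compl_adj_of_inducedComplAdj {G : SimpleGraph J} {S : Set J} {u v : J}
    (h : inducedComplAdj G S u v) : Gᶜ.Adj u v :=
  ⟨h.2.2.1, h.2.2.2⟩

theorem Set.mem_union_pair_cases {A B C : Set J} {u v : J}
    (hu : u ∈ A ∪ B ∪ C) (hv : v ∈ A ∪ B ∪ C) :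
    (u ∈ A ∪ C ∧ v ∈ A ∪ C) ∨ (u ∈ B ∪ C ∧ v ∈ B ∪ C) ∨ (u ∈ A ∧ v ∈ B) ∨
      (v ∈ A ∧ u ∈ B) := by
  simp only [Set.mem_union] at *
  tauto

end

theorem divide_and_conquer_biclique_cover_general {J : Type*} (G : SimpleGraph J)
    (A B C : Set J)
    (hpart : A ∪ B ∪ C = Set.univ)
    (hAB : Disjoint A B)
    (hnoedge : ∀ a ∈ A, ∀ b ∈ B, ¬ G.Adj a b)
    (F1 F2 : List (Set J × Set J))
    (h1 : IsBicliqueCoverRel (inducedComplAdj G (A ∪ C)) F1)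
    (h2 : IsBicliqueCoverRel (inducedComplAdj G (B ∪ C)) F2) :
    IsBicliqueCoverRel Gᶜ.Adj ((A, B) :: (F1 ++ F2)) := by
  have hAB_biclique : Disjoint A B ∧ ∀ a ∈ A, ∀ b ∈ B, Gᶜ.Adj a b :=
    ⟨hAB, fun a ha b hb => ⟨hAB.ne_of_mem ha hb, hnoedge a ha b hb⟩⟩
  refine IsBicliqueCoverRel.cons_append hAB_biclique h1 h2
    (fun _ _ => compl_adj_of_inducedComplAdj) (fun _ _ => compl_adj_of_inducedComplAdj)
    fun u v ⟨hne, hnadj⟩ => ?_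
  rcases Set.mem_union_pair_cases (hpart ▸ Set.mem_univ u) (hpart ▸ Set.mem_univ v) with
    ⟨hu, hv⟩ | ⟨hu, hv⟩ | h
  · exact Or.inl ⟨hu, hv, hne, hnadj⟩
  · exact Or.inr (Or.inl ⟨hu, hv, hne, hnadj⟩)
  · exact Or.inr (Or.inr h)

/-- If `(A,B,C)` partitions the vertex set of `G` with `A`, `B` nonempty and no edge of
`G` between `A` and `B`, and `F1`, `F2` are biclique covers of the complements of the
subgraphs of `G` induced by `A ∪ C` and `B ∪ C` respectively, then `F1`, `F2` together
with the pair `(A, B)` form a biclique cover of the complement graph `Gᶜ`. -/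
theorem divide_and_conquer_biclique_cover {J : Type*} [Fintype J] (G : SimpleGraph J)
    (A B C : Set J)
    (hpart : A ∪ B ∪ C = Set.univ)
    (hAB : Disjoint A B) (hAC : Disjoint A C) (hBC : Disjoint B C)
    (hA : A.Nonempty) (hB : B.Nonempty)
    (hnoedge : ∀ a ∈ A, ∀ b ∈ B, ¬ G.Adj a b)
    (F1 F2 : List (Set J × Set J))
    (h1 : IsBicliqueCoverRel (inducedComplAdj G (A ∪ C)) F1)
    (h2 : IsBicliqueCoverRel (inducedComplAdj G (B ∪ C)) F2) :
    IsBicliqueCoverRel Gᶜ.Adj ((A, B) :: (F1 ++ F2)) :=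
  divide_and_conquer_biclique_cover_general G A B C hpart hAB hnoedge F1 F2 h1 h2
end

section
/- Depth lower bound via conflict edges: if {(L^j, R^j)}_{j=1}^t is an independent branching scheme for CDC(𝒮) (i.e., CDC(𝒮) = ⋂_j (Q(L^j) ∪ Q(R^j))), then for every edge {u, v} of the conflict graph G^c_𝒮 there exists j with (u ∈ L^j ∖ R^j and v ∈ R^j ∖ L^j) or (v ∈ L^j ∖ R^j and u ∈ R^j ∖ L^j); in particular the pairs {(L^j ∖ R^j, R^j ∖ L^j)} restricted to conflict-graph edges cover G^c_𝒮. -/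
variable {J : Type*} [Fintype J] [DecidableEq J]

/-- Membership in the standard simplex `Δ^J`. -/
def InSimplex (l : J → ℝ) : Prop := (∀ v, 0 ≤ l v) ∧ ∑ v, l v = 1

/-- `Q(S)`: the face of the standard simplex induced by `S ⊆ J`. -/
def Qface (S : Set J) (l : J → ℝ) : Prop := InSimplex l ∧ ∀ v ∉ S, l v = 0

/-- The combinatorial disjunctive constraint `CDC(𝒮) = ⋃_{S ∈ 𝒮} Q(S)`. -/
def CDC (𝒮 : Finset (Finset J)) (l : J → ℝ) : Prop := ∃ S ∈ 𝒮, Qface (↑S) l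

/-- Adjacency in the conflict graph `G^c_𝒮`. -/
def ConflictAdj (𝒮 : Finset (Finset J)) (u v : J) : Prop :=
  u ≠ v ∧ ∀ S ∈ 𝒮, ¬ (u ∈ S ∧ v ∈ S)

/-! Each vertex `e_w` of the simplex lies in `CDC(𝒮)`, so every level `j` puts `w` in `L j ∪ R j`.
The midpoint of a conflict edge `{u, v}` does not lie in `CDC(𝒮)`, so some level `j` has neither
`L j` nor `R j` containing both `u` and `v`; together these force `u`, `v` onto opposite sides. -/

section

variable {ι : Type*}

lemma qface_iff_support_subset [Fintype ι] {S : Set ι} {l : ι → ℝ} :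
    Qface S l ↔ InSimplex l ∧ Function.support l ⊆ S := by
  refine and_congr_right fun _ => forall_congr' fun v => ?_
  rw [Function.mem_support, ← not_imp_not, not_not]

lemma inSimplex_single [Fintype ι] [DecidableEq ι] (u : ι) : InSimplex (Pi.single u (1 : ℝ)) :=
  ⟨fun v => by by_cases h : v = u <;> simp [h], by simp⟩

noncomputable def edgeMidpoint [DecidableEq ι] (u v : ι) : ι → ℝ :=
  Pi.single u (1 / 2) + Pi.single v (1 / 2)

lemma inSimplex_edgeMidpoint [Fintype ι] [DecidableEq ι] (u v : ι) :
    InSimplex (edgeMidpoint u v) := by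
  refine ⟨fun w => add_nonneg ?_ ?_, ?_⟩
  · by_cases h : w = u <;> simp [h]
  · by_cases h : w = v <;> simp [h]
  · simp [edgeMidpoint, Finset.sum_add_distrib]; norm_num

lemma support_edgeMidpoint [DecidableEq ι] {u v : ι} (huv : u ≠ v) :
    Function.support (edgeMidpoint u v) = {u, v} := by
  ext w
  by_cases hu : w = u
  · subst hu; simp [edgeMidpoint, huv]
  by_cases hv : w = v
  · subst hv; simp [edgeMidpoint, huv.symm]
  · simp [edgeMidpoint, hu, hv]

lemma qface_single_iff [Fintype ι] [DecidableEq ι] {S : Set ι} {u : ι} :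
    Qface S (Pi.single u (1 : ℝ)) ↔ u ∈ S := by
  simp [qface_iff_support_subset, inSimplex_single, Pi.support_single_of_ne]

lemma qface_edgeMidpoint_iff [Fintype ι] [DecidableEq ι] {S : Set ι} {u v : ι} (huv : u ≠ v) :
    Qface S (edgeMidpoint u v) ↔ u ∈ S ∧ v ∈ S := by
  simp [qface_iff_support_subset, inSimplex_edgeMidpoint, support_edgeMidpoint huv,
    Set.insert_subset_iff]

lemma cdc_single [Fintype ι] [DecidableEq ι] {𝒮 : Finset (Finset ι)}
    (hsing : ∀ v : ι, ∃ S ∈ 𝒮, v ∈ S) (u : ι) : CDC 𝒮 (Pi.single u (1 : ℝ)) := by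
  obtain ⟨S, hS, hu⟩ := hsing u
  exact ⟨S, hS, qface_single_iff.2 hu⟩

lemma not_cdc_edgeMidpoint [Fintype ι] [DecidableEq ι] {𝒮 : Finset (Finset ι)} {u v : ι}
    (huv : ConflictAdj 𝒮 u v) : ¬ CDC 𝒮 (edgeMidpoint u v) := by
  rintro ⟨S, hS, hface⟩
  exact huv.2 S hS ((qface_edgeMidpoint_iff huv.1).1 hface)

end

theorem IB_scheme_separates_conflict_edges_general (𝒮 : Finset (Finset J))
    (hsing : ∀ v : J, ∃ S ∈ 𝒮, v ∈ S)
    (t : ℕ) (L R : Fin t → Set J)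
    (hIB : ∀ l : J → ℝ, CDC 𝒮 l ↔ (InSimplex l ∧ ∀ j, Qface (L j) l ∨ Qface (R j) l)) :
    ∀ u v : J, ConflictAdj 𝒮 u v →
      ∃ j, (u ∈ L j ∧ u ∉ R j ∧ v ∈ R j ∧ v ∉ L j) ∨
           (v ∈ L j ∧ v ∉ R j ∧ u ∈ R j ∧ u ∉ L j) := by
  intro u v huv
  have covered : ∀ w j, w ∈ L j ∨ w ∈ R j := fun w j => by
    simpa only [qface_single_iff] using ((hIB _).1 (cdc_single hsing w)).2 j
  obtain ⟨j, hj⟩ : ∃ j, ¬ (u ∈ L j ∧ v ∈ L j) ∧ ¬ (u ∈ R j ∧ v ∈ R j) := by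
    simpa only [hIB, inSimplex_edgeMidpoint, qface_edgeMidpoint_iff huv.1, true_and,
      not_forall, not_or] using not_cdc_edgeMidpoint huv
  have hu := covered u j
  have hv := covered v j
  exact ⟨j, by tauto⟩

/-- Depth lower bound via conflict edges: if `{(L^j, R^j)}_{j=1}^t` is an independent
branching scheme for `CDC(𝒮)` (with every singleton feasible), then every edge `{u,v}`
of the conflict graph is separated by some level `j`, with `u` and `v` in opposite
sides `L^j ∖ R^j` and `R^j ∖ L^j`. -/
theorem IB_scheme_separates_conflict_edges (𝒮 : Finset (Finset J)) (hne : 𝒮.Nonempty)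
    (hsing : ∀ v : J, ∃ S ∈ 𝒮, v ∈ S)
    (t : ℕ) (L R : Fin t → Set J)
    (hIB : ∀ l : J → ℝ, CDC 𝒮 l ↔ (InSimplex l ∧ ∀ j, Qface (L j) l ∨ Qface (R j) l)) :
    ∀ u v : J, ConflictAdj 𝒮 u v →
      ∃ j, (u ∈ L j ∧ u ∉ R j ∧ v ∈ R j ∧ v ∉ L j) ∨
           (v ∈ L j ∧ v ∉ R j ∧ u ∈ R j ∧ u ∉ L j) :=
  IB_scheme_separates_conflict_edges_general 𝒮 hsing t L R hIB
end

section
/- If every minimal infeasible set of 𝒮 has cardinality 2 (i.e. CDC(𝒮) is pairwise IB-representable), then CDC(𝒮) = ⋂_{v∈J} (Q(J ∖ {v}) ∪ Q(J ∖ N(v))), where N(v) = {u : {u,v} an edge of G^c_𝒮}. -/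
variable {J : Type*} [Fintype J] [DecidableEq J]

/-- `T` is a feasible set with respect to `𝒮`. -/
def Feasible (𝒮 : Finset (Finset J)) (T : Finset J) : Prop := ∃ S ∈ 𝒮, T ⊆ S

/-- `T` is a minimal infeasible set. -/
def MinInfeasible (𝒮 : Finset (Finset J)) (T : Finset J) : Prop :=
  ¬ Feasible 𝒮 T ∧ ∀ T' ⊂ T, Feasible 𝒮 T'

lemma exists_min_infeasible (𝒮 : Finset (Finset J)) (T : Finset J)
    (h : ¬ Feasible 𝒮 T) : ∃ M ⊆ T, MinInfeasible 𝒮 M := by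
  induction T using Finset.strongInduction with
  | _ T ih =>
    by_cases h' : ∀ T' ⊂ T, Feasible 𝒮 T'
    · exact ⟨T, subset_rfl, h, h'⟩
    · push_neg at h'
      obtain ⟨T', hsub, hinf⟩ := h'
      obtain ⟨M, hM, hmin⟩ := ih T' hsub hinf
      exact ⟨M, hM.trans hsub.subset, hmin⟩

/-- The trivial star biclique cover yields an IB representation of depth `|J|` under
pairwise IB-representability: `CDC(𝒮) = ⋂_{v ∈ J} (Q(J ∖ {v}) ∪ Q(J ∖ N(v)))`, where
`N(v)` is the conflict-graph neighborhood of `v`. Equivalently, `λ ∈ CDC(𝒮)` iff for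
each `v`, `λ_v = 0` or `λ_u = 0` for every conflict neighbor `u` of `v`. -/
theorem trivial_cover_IB_representation (𝒮 : Finset (Finset J))
    (hsing : ∀ v : J, ∃ S ∈ 𝒮, v ∈ S)
    (hmin : ∀ M : Finset J, MinInfeasible 𝒮 M → M.card = 2) :
    ∀ l : J → ℝ, CDC 𝒮 l ↔
      (InSimplex l ∧ ∀ v : J,
        Qface (Set.univ \ {v}) l ∨ Qface {u : J | ¬ ConflictAdj 𝒮 u v} l) := by
  classical
  intro l
  constructor
  · rintro ⟨S, hS, hsim, hzero⟩
    refine ⟨hsim, fun v => ?_⟩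
    by_cases hv : v ∈ S
    · right
      refine ⟨hsim, fun u hu => ?_⟩
      simp only [Set.mem_setOf_eq, not_not] at hu
      by_cases huS : u ∈ S
      · exact absurd ⟨huS, hv⟩ (hu.2 S hS)
      · exact hzero u huS
    · left
      refine ⟨hsim, fun u hu => ?_⟩
      simp only [Set.mem_diff, Set.mem_univ, Set.mem_singleton_iff, true_and, not_not] at hu
      subst hu; exact hzero u hv
  · rintro ⟨hsim, hv⟩
    set T : Finset J := Finset.univ.filter (fun u => l u ≠ 0) with hT
    have hfeas : Feasible 𝒮 T := by
      by_contra hinf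
      obtain ⟨M, hMT, hMinf⟩ := exists_min_infeasible 𝒮 T hinf
      obtain ⟨a, b, hab, hMab⟩ := Finset.card_eq_two.mp (hmin M hMinf)
      have hadj : ConflictAdj 𝒮 a b := by
        refine ⟨hab, fun S hS habS => ?_⟩
        exact hMinf.1 ⟨S, hS, by simp [hMab, Finset.insert_subset_iff, habS.1, habS.2]⟩
      have ha : l a ≠ 0 := by
        have := hMT (hMab ▸ Finset.mem_insert_self a {b})
        simpa [hT] using this
      have hb : l b ≠ 0 := by
        have := hMT (hMab ▸ Finset.mem_insert_of_mem (Finset.mem_singleton_self b))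
        simpa [hT] using this
      rcases hv b with ⟨_, h⟩ | ⟨_, h⟩
      · exact hb (h b (by simp))
      · exact ha (h a (by simpa using hadj))
    obtain ⟨S, hS, hTS⟩ := hfeas
    refine ⟨S, hS, hsim, fun u huS => ?_⟩
    by_contra hne
    exact huS (hTS (by simp [hT, hne]))
end

section
/- Feasible sets are exactly the cliques of the feasibility graph under pairwise IB-representability: if every minimal infeasible subset of J (w.r.t. 𝒮) has cardinality 2, then T ⊆ J is feasible iff T induces a clique in the complement G_𝒮 of the conflict graph. -/
/-! An infeasible set contains a minimal infeasible subset; under the hypothesis this is a pair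
`{u, v}` of distinct elements lying in no common `S ∈ 𝒮`, i.e. a non-edge of `G_𝒮`. -/

variable {J : Type*} [Fintype J] [DecidableEq J]

section

variable {α : Type*} {𝒮 : Finset (Finset α)} {T T' : Finset α}

theorem Feasible.mono (hT : Feasible 𝒮 T) (hT' : T' ⊆ T) : Feasible 𝒮 T' :=
  let ⟨S, hS, hTS⟩ := hT
  ⟨S, hS, hT'.trans hTS⟩

theorem feasible_pair_iff [DecidableEq α] {u v : α} :
    Feasible 𝒮 {u, v} ↔ ∃ S ∈ 𝒮, u ∈ S ∧ v ∈ S := by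
  simp only [Feasible, Finset.insert_subset_iff, Finset.singleton_subset_iff]

theorem exists_minInfeasible_subset (hT : ¬ Feasible 𝒮 T) : ∃ M ⊆ T, MinInfeasible 𝒮 M := by
  induction T using Finset.strongInduction with
  | _ T ih =>
    by_cases hproper : ∀ T' ⊂ T, Feasible 𝒮 T'
    · exact ⟨T, subset_rfl, hT, hproper⟩
    · push Not at hproper
      obtain ⟨T', hT'T, hT'⟩ := hproper
      obtain ⟨M, hMT', hM⟩ := ih T' hT'T hT'
      exact ⟨M, hMT'.trans hT'T.subset, hM⟩

end

theorem feasible_iff_clique_in_feasibility_graph_general (𝒮 : Finset (Finset J))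
    (hmin : ∀ M : Finset J, MinInfeasible 𝒮 M → M.card = 2) :
    ∀ T : Finset J,
      Feasible 𝒮 T ↔ ∀ u ∈ T, ∀ v ∈ T, u ≠ v → ∃ S ∈ 𝒮, u ∈ S ∧ v ∈ S := by
  intro T
  constructor
  · rintro hT u hu v hv -
    exact feasible_pair_iff.1 <|
      hT.mono (Finset.insert_subset hu (Finset.singleton_subset_iff.2 hv))
  · intro hclique
    by_contra hT
    obtain ⟨M, hMT, hM⟩ := exists_minInfeasible_subset hT
    obtain ⟨u, v, huv, rfl⟩ := Finset.card_eq_two.1 (hmin M hM)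
    rw [Finset.insert_subset_iff, Finset.singleton_subset_iff] at hMT
    exact hM.1 (feasible_pair_iff.2 (hclique u hMT.1 v hMT.2 huv))

/-- Under pairwise IB-representability (every minimal infeasible set has cardinality 2),
the feasible sets are exactly the cliques of the complement `G_𝒮` of the conflict
graph: `T` is feasible iff every pair of distinct elements of `T` lies in some `S ∈ 𝒮`. -/
theorem feasible_iff_clique_in_feasibility_graph (𝒮 : Finset (Finset J))
    (hsing : ∀ v : J, Feasible 𝒮 {v})
    (hmin : ∀ M : Finset J, MinInfeasible 𝒮 M → M.card = 2) :
    ∀ T : Finset J,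
      Feasible 𝒮 T ↔ ∀ u ∈ T, ∀ v ∈ T, u ≠ v → ∃ S ∈ 𝒮, u ∈ S ∧ v ∈ S :=
  feasible_iff_clique_in_feasibility_graph_general 𝒮 hmin
end
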